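/- Let q, t, b ∈ ℂ with 0 < |q| < 1, |t| < 1, and b q^n ≠ 1 for every integer n ≥ 0. Then (∏_{k=0}^{∞} (1 − t q^k)) · Σ_{n≥0} t^n / ((q;q)_n (1 − b q^n)) = Σ_{n≥0} (−t)^n b^n q^{n(n−1)/2} / (b;q)_{n+1}, both series converging absolutely. -/

import Mathlib

/-!
Write `E(s) = ∑ (-1)^j q^{j(j-1)/2} s^j / (q;q)_j`. Comparing coefficients gives
`E(s) = (1 - s) E(sq)`, hence `E(t) = (t;q)_N E(t q^N)`, and letting `N → ∞`
(dominated convergence, `E(0) = 1`) gives Euler's expansion `(t;q)_∞ = E(t)`.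
The Cauchy product of `E(t)` with the left-hand series then reduces the identity to the
finite one `∑_{i+j=n} (-1)^i q^{i(i-1)/2} / ((q;q)_i (q;q)_j (1 - b q^j)) =
(-1)^n b^n q^{n(n-1)/2} / (b;q)_{n+1}`, proved by induction on `n` for all `b` at once:
both sides `S_n(b)` satisfy `(1 - q^{n+1}) S_{n+1}(b) = S_n(bq) - q^n S_n(b)`.
-/

open Finset

/-- The q-Pochhammer symbol `(z;q)_n = ∏_{k=0}^{n-1} (1 - z q^k)`. -/
def qPoch (z q : ℂ) (n : ℕ) : ℂ := ∏ k ∈ Finset.range n, (1 - z * q ^ k)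

open Filter Topology

section Pochhammer

variable (z q : ℂ)

lemma qPoch_zero : qPoch z q 0 = 1 := prod_range_zero _

lemma qPoch_succ (n : ℕ) : qPoch z q (n + 1) = qPoch z q n * (1 - z * q ^ n) :=
  prod_range_succ _ _

lemma qPoch_succ' (n : ℕ) : qPoch z q (n + 1) = (1 - z) * qPoch (z * q) q n := by
  simp only [qPoch, prod_range_succ', pow_zero, mul_one, pow_succ, mul_assoc, mul_comm]

end Pochhammer

noncomputable def eulerCoeff (q : ℂ) (j : ℕ) : ℂ := (-1) ^ j * q ^ j.choose 2 / qPoch q q j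

noncomputable def fineLhsCoeff (q b : ℂ) (n : ℕ) : ℂ := 1 / (qPoch q q n * (1 - b * q ^ n))

noncomputable def fineRhsCoeff (q b : ℂ) (n : ℕ) : ℂ :=
  (-1) ^ n * b ^ n * q ^ n.choose 2 / qPoch b q (n + 1)

lemma eulerCoeff_zero (q : ℂ) : eulerCoeff q 0 = 1 := by
  simp [eulerCoeff, qPoch_zero]

lemma eulerCoeff_succ (q : ℂ) (j : ℕ) :
    eulerCoeff q (j + 1) = -q ^ j * eulerCoeff q j / (1 - q ^ (j + 1)) := by
  rw [eulerCoeff, eulerCoeff, qPoch_succ, Nat.choose_succ_succ', Nat.choose_one_right, pow_add]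
  simp only [div_eq_mul_inv, mul_inv]
  ring

lemma fineLhsCoeff_succ (q b : ℂ) (n : ℕ) :
    fineLhsCoeff q b (n + 1) = fineLhsCoeff q (b * q) n / (1 - q ^ (n + 1)) := by
  simp only [fineLhsCoeff, qPoch_succ, div_eq_mul_inv, mul_inv]
  ring

section FiniteIdentity

variable {q : ℂ}

lemma one_sub_pow_mul_eulerCoeff_succ (hq : ∀ k, q ^ (k + 1) ≠ 1) (j : ℕ) :
    (1 - q ^ (j + 1)) * eulerCoeff q (j + 1) = -q ^ j * eulerCoeff q j := by
  rw [eulerCoeff_succ, mul_div_cancel₀ _ (sub_ne_zero.2 (hq j).symm)]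

lemma one_sub_pow_mul_fineLhsCoeff_succ (hq : ∀ k, q ^ (k + 1) ≠ 1) (b : ℂ) (n : ℕ) :
    (1 - q ^ (n + 1)) * fineLhsCoeff q b (n + 1) = fineLhsCoeff q (b * q) n := by
  rw [fineLhsCoeff_succ, mul_div_cancel₀ _ (sub_ne_zero.2 (hq n).symm)]

lemma one_sub_pow_mul_fineRhsCoeff_succ {b : ℂ} (hb : ∀ k, b * q ^ k ≠ 1) (n : ℕ) :
    (1 - q ^ (n + 1)) * fineRhsCoeff q b (n + 1) =
      fineRhsCoeff q (b * q) n - q ^ n * fineRhsCoeff q b n := by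
  have h1 : 1 - b ≠ 0 := sub_ne_zero.2 (by simpa using (hb 0).symm)
  have h2 : 1 - b * q ^ (n + 1) ≠ 0 := sub_ne_zero.2 (hb (n + 1)).symm
  have hD : qPoch b q (n + 1 + 1) = (1 - b) * qPoch (b * q) q (n + 1) := qPoch_succ' ..
  have e1 : (qPoch (b * q) q (n + 1))⁻¹ = (1 - b) * (qPoch b q (n + 1 + 1))⁻¹ := by
    rw [hD, mul_inv, ← mul_assoc, mul_inv_cancel₀ h1, one_mul]
  have e2 : (qPoch b q (n + 1))⁻¹ = (1 - b * q ^ (n + 1)) * (qPoch b q (n + 1 + 1))⁻¹ := by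
    rw [qPoch_succ b q (n + 1), mul_inv, mul_left_comm, mul_inv_cancel₀ h2, mul_one]
  simp only [fineRhsCoeff, div_eq_mul_inv, e1, e2, Nat.choose_succ_succ', Nat.choose_one_right]
  ring

lemma one_sub_pow_mul_sum_antidiagonal_succ (hq : ∀ k, q ^ (k + 1) ≠ 1) (b : ℂ) (n : ℕ) :
    (1 - q ^ (n + 1)) * ∑ p ∈ antidiagonal (n + 1), eulerCoeff q p.1 * fineLhsCoeff q b p.2 =
      ∑ p ∈ antidiagonal n, eulerCoeff q p.1 * fineLhsCoeff q (b * q) p.2 -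
        q ^ n * ∑ p ∈ antidiagonal n, eulerCoeff q p.1 * fineLhsCoeff q b p.2 := by
  have hsplit : ∀ p ∈ antidiagonal (n + 1),
      (1 - q ^ (n + 1)) * (eulerCoeff q p.1 * fineLhsCoeff q b p.2) =
        eulerCoeff q p.1 * ((1 - q ^ p.2) * fineLhsCoeff q b p.2) +
          q ^ p.2 * ((1 - q ^ p.1) * eulerCoeff q p.1) * fineLhsCoeff q b p.2 := by
    intro p hp
    rw [← mem_antidiagonal.1 hp, pow_add]
    ring
  have hshift : ∀ p ∈ antidiagonal n,
      q ^ p.2 * ((1 - q ^ (p.1 + 1)) * eulerCoeff q (p.1 + 1)) * fineLhsCoeff q b p.2 =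
        -(q ^ n * (eulerCoeff q p.1 * fineLhsCoeff q b p.2)) := by
    intro p hp
    rw [one_sub_pow_mul_eulerCoeff_succ hq, ← mem_antidiagonal.1 hp, pow_add]
    ring
  rw [mul_sum, sum_congr rfl hsplit, sum_add_distrib, Nat.sum_antidiagonal_succ',
    Nat.sum_antidiagonal_succ, sum_congr rfl hshift, sum_neg_distrib, ← mul_sum]
  simp only [pow_zero, sub_self, zero_mul, mul_zero, zero_add,
    one_sub_pow_mul_fineLhsCoeff_succ hq]
  ring

theorem sum_antidiagonal_eulerCoeff_mul_fineLhsCoeff (hq : ∀ k, q ^ (k + 1) ≠ 1) (n : ℕ) :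
    ∀ b : ℂ, (∀ k, b * q ^ k ≠ 1) →
      ∑ p ∈ antidiagonal n, eulerCoeff q p.1 * fineLhsCoeff q b p.2 = fineRhsCoeff q b n := by
  induction n with
  | zero =>
    intro b _
    simp [eulerCoeff_zero, fineLhsCoeff, fineRhsCoeff, qPoch_succ, qPoch_zero]
  | succ n ih =>
    intro b hb
    have hbq : ∀ k, b * q * q ^ k ≠ 1 := fun k => by
      simpa only [mul_assoc, ← pow_succ'] using hb (k + 1)
    refine mul_left_cancel₀ (sub_ne_zero.2 (hq n).symm) ?_
    rw [one_sub_pow_mul_sum_antidiagonal_succ hq, ih (b * q) hbq, ih b hb,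
      one_sub_pow_mul_fineRhsCoeff_succ hb]

end FiniteIdentity

lemma sum_antidiagonal_mul_pow_mul_mul_pow {R : Type*} [CommSemiring R] (f g : ℕ → R) (t : R)
    (n : ℕ) : ∑ p ∈ antidiagonal n, f p.1 * t ^ p.1 * (g p.2 * t ^ p.2) =
      t ^ n * ∑ p ∈ antidiagonal n, f p.1 * g p.2 := by
  rw [mul_sum]
  refine sum_congr rfl fun p hp => ?_
  rw [← mem_antidiagonal.1 hp, pow_add]
  ring

lemma summable_norm_of_succ_eq_mul {R : Type*} [SeminormedRing R] {f m : ℕ → R} {L : R}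
    (hf : ∀ n, f (n + 1) = m n * f n) (hL : ‖L‖ < 1) (hm : Tendsto m atTop (𝓝 L)) :
    Summable fun n => ‖f n‖ := by
  obtain ⟨r, hLr, hr⟩ := exists_between hL
  refine summable_of_ratio_norm_eventually_le hr ?_
  filter_upwards [hm.norm.eventually_le_const hLr] with n hn
  rw [norm_norm, norm_norm, hf]
  exact (norm_mul_le _ _).trans (mul_le_mul_of_nonneg_right hn (norm_nonneg _))

noncomputable def eulerSeries (q s : ℂ) : ℂ := ∑' j, eulerCoeff q j * s ^ j

lemma eulerSeries_zero (q : ℂ) : eulerSeries q 0 = 1 := by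
  rw [eulerSeries, tsum_eq_single 0 fun j hj => by simp [hj]]
  simp [eulerCoeff_zero]

section Analytic

variable {q : ℂ}

lemma pow_succ_ne_one_of_norm_lt_one (hq1 : ‖q‖ < 1) (k : ℕ) : q ^ (k + 1) ≠ 1 := fun h =>
  (pow_lt_one₀ (norm_nonneg q) hq1 k.succ_ne_zero).ne (by rw [← norm_pow, h, norm_one])

lemma tendsto_comp_pow_of_continuousAt (hq1 : ‖q‖ < 1) {g : ℂ → ℂ} (hg : ContinuousAt g 0) :
    Tendsto (fun n => g (q ^ n)) atTop (𝓝 (g 0)) :=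
  hg.tendsto.comp (tendsto_pow_atTop_nhds_zero_of_norm_lt_one hq1)

lemma summable_norm_eulerCoeff_mul_pow (hq1 : ‖q‖ < 1) (s : ℂ) :
    Summable fun j => ‖eulerCoeff q j * s ^ j‖ := by
  refine summable_norm_of_succ_eq_mul (m := fun j => -s * q ^ j / (1 - q * q ^ j)) (L := 0)
    (fun j => ?_) (by simp) ?_
  · rw [eulerCoeff_succ]
    simp only [div_eq_mul_inv]
    ring
  · simpa using tendsto_comp_pow_of_continuousAt hq1 (g := fun x => -s * x / (1 - q * x))
      (by fun_prop (disch := norm_num))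

lemma summable_norm_fineLhsCoeff_mul_pow (hq1 : ‖q‖ < 1) {t b : ℂ} (ht : ‖t‖ < 1)
    (hb : ∀ k, b * q ^ k ≠ 1) : Summable fun n => ‖fineLhsCoeff q b n * t ^ n‖ := by
  refine summable_norm_of_succ_eq_mul
    (m := fun n => t * (1 - b * q ^ n) / ((1 - q * q ^ n) * (1 - b * (q * q ^ n)))) (L := t)
    (fun n => ?_) ht ?_
  · have h := sub_ne_zero.2 (hb n).symm
    rw [fineLhsCoeff_succ, fineLhsCoeff, fineLhsCoeff]
    field_simp
    ring
  · simpa using tendsto_comp_pow_of_continuousAt hq1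
      (g := fun x => t * (1 - b * x) / ((1 - q * x) * (1 - b * (q * x))))
      (by fun_prop (disch := norm_num))

lemma eulerSeries_eq_one_sub_mul (hq1 : ‖q‖ < 1) (s : ℂ) :
    eulerSeries q s = (1 - s) * eulerSeries q (s * q) := by
  have hs := (summable_norm_eulerCoeff_mul_pow hq1 s).of_norm
  have hsq := (summable_norm_eulerCoeff_mul_pow hq1 (s * q)).of_norm
  have hdiff : eulerSeries q s - eulerSeries q (s * q) = -s * eulerSeries q (s * q) := by
    rw [eulerSeries, eulerSeries, ← hs.tsum_sub hsq, (hs.sub hsq).tsum_eq_zero_add,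
      ← tsum_mul_left]
    simp only [pow_zero, sub_self, zero_add]
    refine tsum_congr fun j => ?_
    rw [← mul_sub, mul_pow s q, ← mul_one_sub, mul_left_comm, mul_comm (eulerCoeff q _),
      one_sub_pow_mul_eulerCoeff_succ (pow_succ_ne_one_of_norm_lt_one hq1), pow_succ]
    ring
  linear_combination hdiff

lemma eulerSeries_eq_prod_range_mul (hq1 : ‖q‖ < 1) (s : ℂ) (N : ℕ) :
    eulerSeries q s = (∏ k ∈ range N, (1 - s * q ^ k)) * eulerSeries q (s * q ^ N) := by
  induction N with
  | zero => simp
  | succ N ih =>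
    rw [ih, eulerSeries_eq_one_sub_mul hq1 (s * q ^ N), prod_range_succ, mul_assoc, mul_assoc,
      ← pow_succ]

lemma tendsto_eulerSeries_mul_pow (hq1 : ‖q‖ < 1) (s : ℂ) :
    Tendsto (fun N => eulerSeries q (s * q ^ N)) atTop (𝓝 1) := by
  rw [← eulerSeries_zero q]
  refine tendsto_tsum_of_dominated_convergence (summable_norm_eulerCoeff_mul_pow hq1 s)
    (fun j => ?_) (Eventually.of_forall fun N j => ?_)
  · simpa using tendsto_comp_pow_of_continuousAt hq1
      (g := fun x => eulerCoeff q j * (s * x) ^ j) (by fun_prop)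
  · rw [mul_pow, ← mul_assoc, norm_mul, norm_pow, norm_pow]
    exact mul_le_of_le_one_right (norm_nonneg _)
      (pow_le_one₀ (by positivity) (pow_le_one₀ (norm_nonneg _) hq1.le))

lemma multipliable_one_sub_mul_pow (hq1 : ‖q‖ < 1) (s : ℂ) :
    Multipliable fun k => 1 - s * q ^ k := by
  simpa [sub_eq_add_neg] using
    Complex.multipliable_one_add_of_summable ((summable_geometric_of_norm_lt_one hq1).mul_left (-s))

theorem tprod_one_sub_mul_pow (hq1 : ‖q‖ < 1) (s : ℂ) :
    ∏' k, (1 - s * q ^ k) = eulerSeries q s := by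
  have h := (multipliable_one_sub_mul_pow hq1 s).hasProd.tendsto_prod_nat.mul
    (tendsto_eulerSeries_mul_pow hq1 s)
  simp only [← eulerSeries_eq_prod_range_mul hq1, mul_one] at h
  exact tendsto_nhds_unique h tendsto_const_nhds

end Analytic

theorem stmt11_general (q t b : ℂ) (hq1 : ‖q‖ < 1)
    (ht : ‖t‖ < 1) (hb : ∀ n : ℕ, b * q ^ n ≠ 1) :
    Summable (fun n : ℕ => t ^ n / (qPoch q q n * (1 - b * q ^ n))) ∧
    Summable (fun n : ℕ => (-t) ^ n * b ^ n * q ^ (n * (n - 1) / 2) / qPoch b q (n + 1)) ∧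
    (∏' k : ℕ, (1 - t * q ^ k)) *
        ∑' n : ℕ, t ^ n / (qPoch q q n * (1 - b * q ^ n)) =
      ∑' n : ℕ, (-t) ^ n * b ^ n * q ^ (n * (n - 1) / 2) / qPoch b q (n + 1) := by
  have hlhs : (fun n : ℕ => t ^ n / (qPoch q q n * (1 - b * q ^ n))) =
      fun n => fineLhsCoeff q b n * t ^ n := by
    funext n
    rw [fineLhsCoeff, one_div_mul_eq_div]
  have hrhs : (fun n : ℕ => (-t) ^ n * b ^ n * q ^ (n * (n - 1) / 2) / qPoch b q (n + 1)) =
      fun n => ∑ p ∈ antidiagonal n,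
        eulerCoeff q p.1 * t ^ p.1 * (fineLhsCoeff q b p.2 * t ^ p.2) := by
    funext n
    rw [sum_antidiagonal_mul_pow_mul_mul_pow, sum_antidiagonal_eulerCoeff_mul_fineLhsCoeff
      (pow_succ_ne_one_of_norm_lt_one hq1) n b hb, fineRhsCoeff, ← Nat.choose_two_right, neg_pow]
    ring
  have hA := summable_norm_eulerCoeff_mul_pow hq1 t
  have hB := summable_norm_fineLhsCoeff_mul_pow hq1 ht hb
  rw [hlhs, hrhs, tprod_one_sub_mul_pow hq1, eulerSeries]
  exact ⟨hB.of_norm, (summable_norm_sum_mul_antidiagonal_of_summable_norm hA hB).of_norm,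
    tsum_mul_tsum_eq_tsum_sum_antidiagonal_of_summable_norm hA hB⟩

/-- A specialization of an identity of Fine (p. 26, eq. (20.41) with `a = b/q`, `c = 0`):
`(t;q)_∞ Σ_{n≥0} t^n/((q;q)_n (1 − b q^n)) = Σ_{n≥0} (−t)^n b^n q^{n(n−1)/2}/(b;q)_{n+1}`. -/
theorem stmt11 (q t b : ℂ) (hq0 : 0 < ‖q‖) (hq1 : ‖q‖ < 1)
    (ht : ‖t‖ < 1) (hb : ∀ n : ℕ, b * q ^ n ≠ 1) :
    Summable (fun n : ℕ => t ^ n / (qPoch q q n * (1 - b * q ^ n))) ∧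
    Summable (fun n : ℕ => (-t) ^ n * b ^ n * q ^ (n * (n - 1) / 2) / qPoch b q (n + 1)) ∧
    (∏' k : ℕ, (1 - t * q ^ k)) *
        ∑' n : ℕ, t ^ n / (qPoch q q n * (1 - b * q ^ n)) =
      ∑' n : ℕ, (-t) ^ n * b ^ n * q ^ (n * (n - 1) / 2) / qPoch b q (n + 1) :=
  stmt11_general q t b hq1 ht hb
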